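/- Under the hypotheses of the preceding setting (J a 2-torsion free Jordan ring with nontrivial idempotent e satisfying conditions (i)–(iii), and φ : J → J' a bijective n-multiplicative isomorphism onto a Jordan ring J'), for all a, b ∈ J_{1/2} and a₀ ∈ J₀ one has φ(a·a₀ + b) = φ(a·a₀) + φ(b). -/

import Mathlib

/-!
Suppose `φ c = φ x + φ y`. By `n`-multiplicativity this relation survives multiplication of
`c`, `x`, `y` by the same `n - 1` factors, and injectivity of `φ` turns the result into identities
in `J` for `d = c - x - y`. Products whose factors lie in `J₀` kill `J₁` and preserve `J_{1/2}`
and `J₀`, and `2e` acts as the identity on `J_{1/2}`, so it can be used to pad such products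
to the length `n` requires. Conditions (i)–(iii) then force `d = 0`, which gives additivity of `φ`
on `J₁ + J₀`, `J₀ + J_{1/2}`, `J₁ + J_{1/2}` and `(J₁ + J₀) + J_{1/2}`.

Since `(2e + a)(a₀ + b) = a a₀ + b + ab` with `ab ∈ J₁ + J₀`, applying `φ` to the monomial
`2e(2e(⋯((2e + a)(a₀ + b))))` and expanding both sides with these additivity rules gives the claim.
-/

/-- Peirce 1-component relative to `e`: elements `x` with `e*x = x`. -/
def peirce1 {J : Type*} [Mul J] (e : J) : Set J := {x | e * x = x}

/-- Peirce 1/2-component relative to `e`: elements `x` with `e*x = (1/2)x`, i.e. `e*x + e*x = x`. -/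
def peirceHalf {J : Type*} [Mul J] [Add J] (e : J) : Set J := {x | e * x + e * x = x}

/-- Peirce 0-component relative to `e`: elements `x` with `e*x = 0`. -/
def peirce0 {J : Type*} [Mul J] [Zero J] (e : J) : Set J := {x | e * x = 0}

/-- The right-normed nonassociative monomial `x₁(x₂(⋯(x_{n-1}x_n)⋯))` on a list of arguments. -/
def rnm {J : Type*} [Mul J] [Zero J] : List J → J
  | [] => 0
  | [x] => x
  | x :: y :: l => x * rnm (y :: l)

/-- `φ` is an `n`-multiplicative map (w.r.t. the right-normed monomial of degree `n`). -/
def IsNMulMap {J J' : Type*} [Mul J] [Zero J] [Mul J'] [Zero J'] (n : ℕ) (φ : J → J') : Prop :=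
  ∀ l : List J, l.length = n → φ (rnm l) = rnm (l.map φ)

open Function Set AddMonoidHom

section Monomials

variable {R : Type*}

theorem rnm_cons_of_ne_nil [Mul R] [Zero R] (x : R) {l : List R} (hl : l ≠ []) :
    rnm (x :: l) = x * rnm l := by
  cases l with
  | nil => exact absurd rfl hl
  | cons y t => rfl

theorem rnm_append_singleton [Mul R] [Zero R] (L : List R) (z : R) :
    rnm (L ++ [z]) = L.foldr (· * ·) z := by
  induction L with
  | nil => rfl
  | cons a t ih => rw [List.cons_append, rnm_cons_of_ne_nil a (by simp), ih, List.foldr_cons]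

section Semiring

variable [NonUnitalNonAssocSemiring R]

theorem foldr_mul_add (L : List R) (x y : R) :
    L.foldr (· * ·) (x + y) = L.foldr (· * ·) x + L.foldr (· * ·) y := by
  induction L with
  | nil => rfl
  | cons a t ih => simp only [List.foldr_cons, ih, mul_add]

theorem foldr_mul_zero (L : List R) : L.foldr (· * ·) (0 : R) = 0 := by
  induction L with
  | nil => rfl
  | cons a t ih => simp only [List.foldr_cons, ih, mul_zero]

theorem foldr_replicate_mul (k : ℕ) (a z : R) :
    (List.replicate k a).foldr (· * ·) z = (mulLeft a)^[k] z := by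
  induction k with
  | zero => rfl
  | succ k ih => rw [List.replicate_succ, List.foldr_cons, ih, iterate_succ_apply']; rfl

theorem rnm_replicate_append_singleton (k : ℕ) (a u : R) :
    rnm (List.replicate k a ++ [u]) = (mulLeft a)^[k] u := by
  rw [rnm_append_singleton, foldr_replicate_mul]

theorem rnm_replicate_append_pair (k : ℕ) (a x y : R) :
    rnm (List.replicate k a ++ [x, y]) = (mulLeft a)^[k] (x * y) := by
  rw [show List.replicate k a ++ [x, y] = List.replicate k a ++ [x] ++ [y] by simp,
    rnm_append_singleton, List.foldr_append, foldr_replicate_mul]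
  rfl

end Semiring

theorem foldr_mul_sub [NonUnitalNonAssocRing R] (L : List R) (x y : R) :
    L.foldr (· * ·) (x - y) = L.foldr (· * ·) x - L.foldr (· * ·) y := by
  induction L with
  | nil => rfl
  | cons a t ih => simp only [List.foldr_cons, ih, mul_sub]

theorem foldr_mem [Mul R] {P S : Set R} (hPS : ∀ t ∈ P, ∀ x ∈ S, t * x ∈ S) {L : List R}
    (hL : ∀ t ∈ L, t ∈ P) {x : R} (hx : x ∈ S) : L.foldr (· * ·) x ∈ S := by
  induction L with
  | nil => exact hx
  | cons a t ih =>
    exact hPS a (hL a List.mem_cons_self) _ (ih fun s hs => hL s (List.mem_cons_of_mem a hs))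

def MulFaithful [Mul R] [Zero R] (P S : Set R) : Prop :=
  ∀ a ∈ S, (∀ t ∈ P, t * a = 0) → a = 0

theorem MulFaithful.eq_zero_of_forall_foldr_eq_zero [Mul R] [Zero R] {P S : Set R}
    (hfaith : MulFaithful P S) (hPS : ∀ t ∈ P, ∀ x ∈ S, t * x ∈ S) {m : ℕ} {x : R} (hx : x ∈ S)
    (hL : ∀ L : List R, L.length = m → (∀ t ∈ L, t ∈ P) → L.foldr (· * ·) x = 0) : x = 0 := by
  induction m generalizing x with
  | zero => exact hL [] rfl (by simp)
  | succ m ih =>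
    refine hfaith x hx fun t ht => ih (hPS t ht x hx) fun L hlen hLP => ?_
    have h := hL (L ++ [t]) (by simp [hlen]) (by
      simp only [List.mem_append, List.mem_singleton]
      rintro s (hs | rfl)
      exacts [hLP s hs, ht])
    simpa using h

end Monomials

namespace IsNMulMap

variable {J J' : Type*}

section Magma

variable [Mul J] [Zero J] [Mul J'] [Zero J'] {n : ℕ} {φ : J → J'}

theorem map_foldr (hφ : IsNMulMap n φ) {L : List J} (hL : L.length + 1 = n) (z : J) :
    φ (L.foldr (· * ·) z) = (L.map φ).foldr (· * ·) (φ z) := by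
  have h := hφ (L ++ [z]) (by simpa using hL)
  rwa [rnm_append_singleton, List.map_append, List.map_singleton, rnm_append_singleton] at h

theorem map_mul_rnm (hφ : IsNMulMap n φ) {G : List J} (hG : G.length + 1 = n) (hG₀ : G ≠ [])
    (z : J) : φ (z * rnm G) = φ z * rnm (G.map φ) := by
  have h := hφ (z :: G) (by simpa using hG)
  rwa [rnm_cons_of_ne_nil z hG₀, List.map_cons, rnm_cons_of_ne_nil _ (by simpa using hG₀)] at h

end Magma

variable [NonUnitalNonAssocSemiring J'] {k : ℕ} {φ : J → J'}

theorem map_zero [NonUnitalNonAssocSemiring J] (hφ : IsNMulMap (k + 2) φ) (hsurj : Surjective φ) :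
    φ 0 = 0 := by
  obtain ⟨z, hz⟩ := hsurj 0
  have h := hφ.map_foldr (L := List.replicate (k + 1) z) (by simp) 0
  rwa [foldr_mul_zero, List.map_replicate, hz, List.replicate_succ, List.foldr_cons,
    zero_mul] at h

theorem map_iterate_mul [NonUnitalNonAssocSemiring J] (hφ : IsNMulMap (k + 2) φ) (a x y : J) :
    φ ((mulLeft a)^[k] (x * y)) = (mulLeft (φ a))^[k] (φ x * φ y) := by
  have h := hφ (List.replicate k a ++ [x, y]) (by simp)
  rwa [rnm_replicate_append_pair, List.map_append, List.map_replicate, List.map_cons,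
    List.map_cons, List.map_nil, rnm_replicate_append_pair] at h

theorem map_iterate_add_mul_add [NonUnitalNonAssocSemiring J] (hφ : IsNMulMap (k + 2) φ)
    {p q r s : J} (hpq : φ (p + q) = φ p + φ q) (hrs : φ (r + s) = φ r + φ s) (a : J) :
    φ ((mulLeft a)^[k] ((p + q) * (r + s))) =
      φ ((mulLeft a)^[k] (p * r)) + φ ((mulLeft a)^[k] (p * s)) +
        (φ ((mulLeft a)^[k] (q * r)) + φ ((mulLeft a)^[k] (q * s))) := by
  rw [hφ.map_iterate_mul, hpq, hrs, add_mul, mul_add, mul_add, iterate_map_add, iterate_map_add,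
    iterate_map_add, hφ.map_iterate_mul a p r, hφ.map_iterate_mul a p s,
    hφ.map_iterate_mul a q r, hφ.map_iterate_mul a q s]

theorem map_mul_of_map_eq_add [NonUnitalNonAssocSemiring J] (hφ : IsNMulMap (k + 2) φ)
    {a u c x y : J} (hau : a * u = u) (hc : φ c = φ x + φ y) :
    φ (c * u) = φ (x * u) + φ (y * u) := by
  have hG := hφ.map_mul_rnm (G := List.replicate k a ++ [u]) (by simp) (by simp)
  rw [rnm_replicate_append_singleton, iterate_fixed (f := mulLeft a) hau] at hG
  rw [hG, hG, hG, hc, add_mul]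

theorem foldr_sub_sub_eq_zero [NonUnitalNonAssocRing J] (hφ : IsNMulMap (k + 2) φ)
    (hinj : Injective φ) (h₀ : φ 0 = 0) {c x y : J} (hc : φ c = φ x + φ y) {L : List J}
    (hL : L.length = k + 1) (hx : L.foldr (· * ·) x = 0) : L.foldr (· * ·) (c - x - y) = 0 := by
  have hcy : L.foldr (· * ·) c = L.foldr (· * ·) y := hinj <| by
    rw [hφ.map_foldr (by omega), hφ.map_foldr (by omega), hc, foldr_mul_add,
      ← hφ.map_foldr (by omega) x, hx, h₀, zero_add]
  rw [foldr_mul_sub, foldr_mul_sub, hcy, hx, sub_zero, sub_self]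

end IsNMulMap

theorem Function.Surjective.map_add_of_forall_sub_sub_eq_zero {J J' : Type*} [AddCommGroup J]
    [Add J'] {φ : J → J'} (hsurj : Surjective φ) {x y : J}
    (h : ∀ c, φ c = φ x + φ y → c - x - y = 0) : φ (x + y) = φ x + φ y := by
  obtain ⟨c, hc⟩ := hsurj (φ x + φ y)
  have hcxy := h c hc
  rw [sub_sub, sub_eq_zero] at hcxy
  rwa [← hcxy]

section Peirce

variable {J : Type*} [NonUnitalNonAssocCommRing J] {e : J}

theorem peirceHalf_add_peirce0_eq_zero {w t : J} (hw : w ∈ peirceHalf e) (ht : t ∈ peirce0 e)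
    (hwt : w + t = 0) : w = 0 ∧ t = 0 := by
  have hew : e * w = 0 := by
    have h := congrArg (e * ·) hwt
    rwa [mul_add, ht, add_zero, mul_zero] at h
  have hw0 : w = 0 := by rw [← hw, hew, add_zero]
  exact ⟨hw0, by rwa [hw0, zero_add] at hwt⟩

theorem add_mem_peirceHalf {u v : J} (hu : u ∈ peirceHalf e) (hv : v ∈ peirceHalf e) :
    u + v ∈ peirceHalf e :=
  show e * (u + v) + e * (u + v) = u + v by rw [mul_add, add_add_add_comm, hu, hv]

theorem two_idem_mul_of_mem_peirceHalf {u : J} (hu : u ∈ peirceHalf e) : (e + e) * u = u := by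
  rw [add_mul, hu]

theorem iterate_two_idem_mul_of_mem_peirceHalf {u : J} (hu : u ∈ peirceHalf e) (k : ℕ) :
    (mulLeft (e + e))^[k] u = u :=
  iterate_fixed (f := mulLeft (e + e)) (two_idem_mul_of_mem_peirceHalf hu) k

theorem two_idem_mul_of_mem_peirce0 {t : J} (ht : t ∈ peirce0 e) : (e + e) * t = 0 := by
  rw [add_mul, ht, add_zero]

theorem mapsTo_two_idem_mul_peirce1 : MapsTo (mulLeft (e + e)) (peirce1 e) (peirce1 e) :=
  fun x (hx : e * x = x) => show e * ((e + e) * x) = (e + e) * x by rw [add_mul, hx, mul_add, hx]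

theorem mapsTo_two_idem_mul_peirce0 : MapsTo (mulLeft (e + e)) (peirce0 e) (peirce0 e) :=
  fun t ht => show e * ((e + e) * t) = 0 by rw [two_idem_mul_of_mem_peirce0 ht, mul_zero]

theorem eq_zero_of_iterate_two_idem_mul_eq_zero (h2 : ∀ x : J, x + x = 0 → x = 0) {x : J}
    (hx : x ∈ peirce1 e) {k : ℕ} (hk : (mulLeft (e + e))^[k] x = 0) : x = 0 := by
  induction k generalizing x with
  | zero => exact hk
  | succ k ih =>
    rw [iterate_succ_apply] at hk
    have h : (e + e) * x = 0 := ih (mapsTo_two_idem_mul_peirce1 hx) hk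
    rw [add_mul, hx] at h
    exact h2 x h

variable [IsCommJordan J] (h2 : ∀ x : J, x + x = 0 → x = 0)

include h2 in
attribute [local instance] LieRing.ofAssociativeRing in
theorem jordan_polarized (a b c y : J) :
    a * (b * c * y) - b * c * (a * y) + (b * (c * a * y) - c * a * (b * y)) +
      (c * (a * b * y) - a * b * (c * y)) = 0 := by
  have h := congrArg (· y) (two_nsmul_lie_lmul_lmul_add_add_eq_zero a b c)
  apply h2
  simp only [Ring.lie_def, two_nsmul, AddMonoid.End.zero_apply] at h
  exact h

variable (he : e * e = e)
include h2 he

theorem idem_jordan (u y : J) :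
    e * (e * u * y) + e * (e * u * y) + u * (e * y) =
      e * u * (e * y) + e * u * (e * y) + e * (u * y) := by
  have h := jordan_polarized h2 e e u y
  rw [he, mul_comm u e] at h
  linear_combination (norm := abel) h

/-- `hc` says `L_e (2 L_e - 1) (L_e - 1) = 0`; the components are the images of `z` under the
projections `L_e (2 L_e - 1)`, `4 L_e (1 - L_e)` and `(2 L_e - 1) (L_e - 1)`, which have integer
coefficients. -/
theorem exists_peirce_decomposition (z : J) :
    ∃ x ∈ peirce1 e, ∃ w ∈ peirceHalf e, ∃ t ∈ peirce0 e, z = x + w + t := by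
  have hc := idem_jordan h2 he z e
  simp only [he, mul_comm _ e] at hc
  refine ⟨2 • (e * (e * z)) - e * z, ?_, 4 • (e * z) - 4 • (e * (e * z)), ?_,
    z - 3 • (e * z) + 2 • (e * (e * z)), ?_, by module⟩
  · show e * _ = _
    rw [mul_sub, mul_smul_comm]
    linear_combination (norm := module) hc
  · show e * _ + e * _ = _
    rw [mul_sub, mul_smul_comm, mul_smul_comm]
    linear_combination (norm := module) (-4 : ℤ) • hc
  · show e * _ = 0
    rw [mul_add, mul_sub, mul_smul_comm, mul_smul_comm]
    linear_combination (norm := module) hc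

theorem mul_idem_mul_of_mem_peirce0 {t : J} (ht : t ∈ peirce0 e) (y : J) :
    t * (e * y) = e * (t * y) := by
  have h := idem_jordan h2 he t y
  rw [ht] at h
  simpa using h

theorem peirce0_mul_peirce1 {t x : J} (ht : t ∈ peirce0 e) (hx : x ∈ peirce1 e) : t * x = 0 := by
  have h := idem_jordan h2 he x t
  rw [hx, ht] at h
  simp only [mul_zero, add_zero, zero_add, mul_comm x t] at h
  have hext : e * (t * x) = 0 := add_eq_left.1 h
  rw [← hx, mul_idem_mul_of_mem_peirce0 h2 he ht, hext]

theorem peirce0_mul_peirce0 {s t : J} (hs : s ∈ peirce0 e) (ht : t ∈ peirce0 e) :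
    s * t ∈ peirce0 e :=
  show e * (s * t) = 0 by rw [← mul_idem_mul_of_mem_peirce0 h2 he hs, ht, mul_zero]

theorem peirce0_mul_peirceHalf {t u : J} (ht : t ∈ peirce0 e) (hu : u ∈ peirceHalf e) :
    t * u ∈ peirceHalf e :=
  show e * (t * u) + e * (t * u) = t * u by
    rw [← mul_idem_mul_of_mem_peirce0 h2 he ht, ← mul_add, hu]

theorem peirce1_mul_peirceHalf {x u : J} (hx : x ∈ peirce1 e) (hu : u ∈ peirceHalf e) :
    x * u ∈ peirceHalf e := by
  have h := idem_jordan h2 he x u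
  rw [hx] at h
  have hxu : e * (x * u) = x * (e * u) := by linear_combination (norm := abel) h
  show e * (x * u) + e * (x * u) = x * u
  rw [hxu, ← mul_add, hu]

theorem peirceHalf_mul_peirceHalf {u v : J} (hu : u ∈ peirceHalf e) (hv : v ∈ peirceHalf e) :
    ∃ x ∈ peirce1 e, ∃ y ∈ peirce0 e, u * v = x + y := by
  have h := jordan_polarized h2 u v e e
  simp only [he, mul_comm _ e] at h
  have hu' : u * (e * (e * v)) + u * (e * (e * v)) = e * u * (e * v) + e * u * (e * v) := by
    rw [← mul_add, ← mul_add, hv, ← add_mul, hu]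
  have hv' : v * (e * (e * u)) + v * (e * (e * u)) = e * u * (e * v) + e * u * (e * v) := by
    rw [← mul_add, ← mul_add, hu, mul_comm, ← mul_add, hv]
  have hmem : e * (e * (u * v)) = e * (u * v) := by
    rw [mul_comm (e * v) (e * u)] at h
    refine sub_eq_zero.1 (h2 _ ?_)
    linear_combination (norm := module) (2 : ℤ) • h - hu' - hv'
  refine ⟨e * (u * v), hmem, u * v - e * (u * v), ?_, by abel⟩
  show e * (_ - _) = 0
  rw [mul_sub, hmem, sub_self]

end Peirce

section Chains

variable {J : Type*} [NonUnitalNonAssocCommRing J] [IsCommJordan J]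
  (h2 : ∀ x : J, x + x = 0 → x = 0) {e : J} (he : e * e = e)
include h2 he

theorem foldr_eq_zero_of_mem_peirce1 {L : List J} (hL : L ≠ []) (hL₀ : ∀ t ∈ L, t ∈ peirce0 e)
    {x : J} (hx : x ∈ peirce1 e) : L.foldr (· * ·) x = 0 := by
  obtain ⟨L, t, rfl⟩ := List.eq_nil_or_concat L |>.resolve_left hL
  rw [List.concat_eq_append, List.foldr_append, List.foldr_cons, List.foldr_nil,
    peirce0_mul_peirce1 h2 he (hL₀ t (by simp)) hx, foldr_mul_zero]

theorem mem_peirce1_of_forall_foldr_eq_zero (hc₂ : MulFaithful (peirce0 e) (peirce0 e))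
    (hc₃ : MulFaithful (peirce0 e) (peirceHalf e)) {m : ℕ} {d : J}
    (hd : ∀ L : List J, L.length = m + 1 → (∀ t ∈ L, t ∈ peirce0 e) → L.foldr (· * ·) d = 0) :
    d ∈ peirce1 e := by
  obtain ⟨x, hx, w, hw, t, ht, rfl⟩ := exists_peirce_decomposition h2 he d
  have hwt : ∀ L : List J, L.length = m + 1 → (∀ s ∈ L, s ∈ peirce0 e) →
      L.foldr (· * ·) w = 0 ∧ L.foldr (· * ·) t = 0 := fun L hL hL₀ => by
    refine peirceHalf_add_peirce0_eq_zero (foldr_mem (fun _ hs _ => peirce0_mul_peirceHalf h2 he hs)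
      hL₀ hw) (foldr_mem (fun _ hs _ => peirce0_mul_peirce0 h2 he hs) hL₀ ht) ?_
    have h := hd L hL hL₀
    rwa [foldr_mul_add, foldr_mul_add,
      foldr_eq_zero_of_mem_peirce1 h2 he (by rintro rfl; simp at hL) hL₀ hx, zero_add] at h
  have hw0 : w = 0 := hc₃.eq_zero_of_forall_foldr_eq_zero
    (fun _ hs _ => peirce0_mul_peirceHalf h2 he hs) hw fun L hL hL₀ => (hwt L hL hL₀).1
  have ht0 : t = 0 := hc₂.eq_zero_of_forall_foldr_eq_zero
    (fun _ hs _ => peirce0_mul_peirce0 h2 he hs) ht fun L hL hL₀ => (hwt L hL hL₀).2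
  rwa [hw0, ht0, add_zero, add_zero]

end Chains

namespace IsNMulMap

variable {J J' : Type*} [NonUnitalNonAssocCommRing J] [NonUnitalNonAssocSemiring J']
  (h2 : ∀ x : J, x + x = 0 → x = 0) {e : J} (he : e * e = e)
  {k : ℕ} {φ : J → J'} (hφ : IsNMulMap (k + 2) φ) (hbij : Bijective φ) {c x y : J}

include h2 hφ hbij in
/-- The product `2e(⋯(2e(e ·)))` of length `n - 1` kills `y` and is injective on `J₁`. -/
theorem sub_sub_eq_zero_of_mem_peirce0 (hc : φ c = φ x + φ y) (hy : y ∈ peirce0 e)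
    (hd : c - x - y ∈ peirce1 e) : c - x - y = 0 := by
  have h := hφ.foldr_sub_sub_eq_zero hbij.1 (hφ.map_zero hbij.2) ((add_comm (φ x) _) ▸ hc)
    (L := List.replicate k (e + e) ++ [e]) (by simp) (by
      rw [List.foldr_append, List.foldr_cons, List.foldr_nil, hy, foldr_mul_zero])
  rw [List.foldr_append, List.foldr_cons, List.foldr_nil, sub_right_comm, hd,
    foldr_replicate_mul] at h
  exact eq_zero_of_iterate_two_idem_mul_eq_zero h2 hd h

variable [IsCommJordan J]
include h2 he hφ hbij

theorem sub_sub_mem_peirce1 (hc₂ : MulFaithful (peirce0 e) (peirce0 e))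
    (hc₃ : MulFaithful (peirce0 e) (peirceHalf e)) (hc : φ c = φ x + φ y) (hx : x ∈ peirce1 e) :
    c - x - y ∈ peirce1 e :=
  mem_peirce1_of_forall_foldr_eq_zero h2 he hc₂ hc₃ fun L hL hL₀ =>
    hφ.foldr_sub_sub_eq_zero hbij.1 (hφ.map_zero hbij.2) hc hL
      (foldr_eq_zero_of_mem_peirce1 h2 he (by rintro rfl; simp at hL) hL₀ hx)

/-- Multiplying by `u` and then by `e` moves `y` into `J₁`, where products of elements of `J₀`
vanish. -/
theorem sub_sub_mul_eq_zero (hc₃ : MulFaithful (peirce0 e) (peirceHalf e))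
    (hc : φ c = φ x + φ y) (hy : y ∈ peirceHalf e) {u : J} (hu : u ∈ peirceHalf e)
    (hdu : (c - x - y) * u ∈ peirceHalf e) : (c - x - y) * u = 0 := by
  have hcue := hφ.map_mul_of_map_eq_add he (hφ.map_mul_of_map_eq_add
    (two_idem_mul_of_mem_peirceHalf hu) hc)
  obtain ⟨p, hp, q, hq, hyu⟩ := peirceHalf_mul_peirceHalf h2 he hy hu
  have hyue : y * u * e = p := by rw [mul_comm, hyu, mul_add, hp, hq, add_zero]
  have hedu : e * ((c - x - y) * u) ∈ peirceHalf e := by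
    show e * _ + e * _ = _
    rw [← mul_add, hdu]
  have hedu0 : e * ((c - x - y) * u) = 0 := hc₃.eq_zero_of_forall_foldr_eq_zero
    (fun _ hs _ => peirce0_mul_peirceHalf h2 he hs) hedu fun L hL hL₀ => by
      have h := hφ.foldr_sub_sub_eq_zero hbij.1 (hφ.map_zero hbij.2) ((add_comm (φ _) _) ▸ hcue)
        hL <| by
          rw [hyue]
          exact foldr_eq_zero_of_mem_peirce1 h2 he (by rintro rfl; simp at hL) hL₀ hp
      rwa [sub_right_comm, ← sub_mul, ← sub_mul, mul_comm, ← sub_mul, ← sub_mul] at h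
  rw [← hdu, hedu0, add_zero]

theorem map_add_of_mem_peirce1_of_mem_peirce0 (hc₂ : MulFaithful (peirce0 e) (peirce0 e))
    (hc₃ : MulFaithful (peirce0 e) (peirceHalf e)) (hx : x ∈ peirce1 e) (hy : y ∈ peirce0 e) :
    φ (x + y) = φ x + φ y :=
  hbij.2.map_add_of_forall_sub_sub_eq_zero fun _ hc =>
    sub_sub_eq_zero_of_mem_peirce0 h2 hφ hbij hc hy
      (sub_sub_mem_peirce1 h2 he hφ hbij hc₂ hc₃ hc hx)

theorem map_add_of_mem_peirce0_of_mem_peirceHalf (hc₁' : MulFaithful (peirceHalf e) (peirce0 e))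
    (hc₃ : MulFaithful (peirce0 e) (peirceHalf e)) (hx : x ∈ peirce0 e) (hy : y ∈ peirceHalf e) :
    φ (x + y) = φ x + φ y := by
  refine hbij.2.map_add_of_forall_sub_sub_eq_zero fun c hc => ?_
  have hce : c * e = y * e := hbij.1 <| by
    rw [hφ.map_mul_of_map_eq_add he hc, mul_comm x, hx, hφ.map_zero hbij.2, zero_add]
  have hd : c - x - y ∈ peirce0 e := show e * _ = 0 by
    rw [mul_sub, mul_sub, mul_comm e c, hce, hx, mul_comm y, sub_zero, sub_self]
  refine hc₁' _ hd fun u hu => ?_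
  rw [mul_comm]
  exact sub_sub_mul_eq_zero h2 he hφ hbij hc₃ hc hy hu (peirce0_mul_peirceHalf h2 he hd hu)

theorem map_add_of_mem_peirce1_of_mem_peirceHalf (hc₁ : MulFaithful (peirceHalf e) (peirce1 e))
    (hc₂ : MulFaithful (peirce0 e) (peirce0 e)) (hc₃ : MulFaithful (peirce0 e) (peirceHalf e))
    (hx : x ∈ peirce1 e) (hy : y ∈ peirceHalf e) : φ (x + y) = φ x + φ y := by
  refine hbij.2.map_add_of_forall_sub_sub_eq_zero fun c hc => ?_
  have hd := sub_sub_mem_peirce1 h2 he hφ hbij hc₂ hc₃ hc hx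
  refine hc₁ _ hd fun u hu => ?_
  rw [mul_comm]
  exact sub_sub_mul_eq_zero h2 he hφ hbij hc₃ hc hy hu (peirce1_mul_peirceHalf h2 he hd hu)

/-- Grouping `x + y + w` as `x + (y + w)` shows `c - x - y - w ∈ J₁`; grouping it as
`(x + w) + y` then shows `c - x - y - w = 0`. -/
theorem map_add_add_of_mem_peirce1_of_mem_peirce0_of_mem_peirceHalf
    (hc₁ : MulFaithful (peirceHalf e) (peirce1 e)) (hc₁' : MulFaithful (peirceHalf e) (peirce0 e))
    (hc₂ : MulFaithful (peirce0 e) (peirce0 e)) (hc₃ : MulFaithful (peirce0 e) (peirceHalf e))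
    (hx : x ∈ peirce1 e) (hy : y ∈ peirce0 e) {w : J} (hw : w ∈ peirceHalf e) :
    φ (x + y + w) = φ (x + y) + φ w := by
  refine hbij.2.map_add_of_forall_sub_sub_eq_zero fun c hc => ?_
  rw [map_add_of_mem_peirce1_of_mem_peirce0 h2 he hφ hbij hc₂ hc₃ hx hy] at hc
  have hcx : φ c = φ x + φ (y + w) := by
    rw [hc, map_add_of_mem_peirce0_of_mem_peirceHalf h2 he hφ hbij hc₁' hc₃ hy hw, add_assoc]
  have hcy : φ c = φ (x + w) + φ y := by
    rw [hc, map_add_of_mem_peirce1_of_mem_peirceHalf h2 he hφ hbij hc₁ hc₂ hc₃ hx hw,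
      add_right_comm]
  have hd : c - (x + y) - w = c - (x + w) - y := by abel
  rw [hd]
  refine sub_sub_eq_zero_of_mem_peirce0 h2 hφ hbij hcy hy ?_
  rw [← hd, show c - (x + y) - w = c - x - (y + w) by abel]
  exact sub_sub_mem_peirce1 h2 he hφ hbij hc₂ hc₃ hcx hx

end IsNMulMap

theorem nMulIso_add_half_prod_general {J J' : Type*} [NonUnitalNonAssocCommRing J] [NonUnitalNonAssocCommRing J']
    (hJordan : ∀ x y : J, ((x * x) * y) * x = (x * x) * (y * x))
    (h2 : ∀ x : J, x + x = 0 → x = 0)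
    (e : J) (hid : e * e = e)
    (hcond1 : ∀ a ∈ peirce1 e, (∀ t ∈ peirceHalf e, t * a = 0) → a = 0)
    (hcond1' : ∀ a ∈ peirce0 e, (∀ t ∈ peirceHalf e, t * a = 0) → a = 0)
    (hcond2 : ∀ a ∈ peirce0 e, (∀ t ∈ peirce0 e, t * a = 0) → a = 0)
    (hcond3 : ∀ a ∈ peirceHalf e, (∀ t ∈ peirce0 e, t * a = 0) → a = 0)
    (n : ℕ) (hn : 2 ≤ n) (φ : J → J')
    (hbij : Function.Bijective φ) (hmul : IsNMulMap n φ) :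
    ∀ a ∈ peirceHalf e, ∀ b ∈ peirceHalf e, ∀ a₀ ∈ peirce0 e,
      φ (a * a₀ + b) = φ (a * a₀) + φ b := by
  obtain ⟨k, rfl⟩ : ∃ k, n = k + 2 := ⟨n - 2, by omega⟩
  have : IsCommJordan J :=
    ⟨fun a b => by rw [mul_comm (a * b), mul_comm a b, ← hJordan, mul_comm _ a, mul_comm (a * a) b]⟩
  intro a ha b hb a₀ ha₀
  have h2e : e + e ∈ peirce1 e := show e * (e + e) = e + e by rw [mul_add, hid]
  have haa₀ : a * a₀ ∈ peirceHalf e := mul_comm a₀ a ▸ peirce0_mul_peirceHalf h2 hid ha₀ ha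
  obtain ⟨x, hx, y, hy, hab⟩ := peirceHalf_mul_peirceHalf h2 hid ha hb
  have hprod : (mulLeft (e + e))^[k] ((e + e + a) * (a₀ + b)) =
      (mulLeft (e + e))^[k] x + (mulLeft (e + e))^[k] y + (a * a₀ + b) := by
    rw [add_mul, mul_add, mul_add, two_idem_mul_of_mem_peirce0 ha₀,
      two_idem_mul_of_mem_peirceHalf hb, hab, iterate_map_add, iterate_map_add, iterate_map_add,
      iterate_map_add, iterate_map_zero, iterate_two_idem_mul_of_mem_peirceHalf hb,
      iterate_two_idem_mul_of_mem_peirceHalf haa₀]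
    abel
  have key := hmul.map_iterate_add_mul_add
    (hmul.map_add_of_mem_peirce1_of_mem_peirceHalf h2 hid hbij hcond1 hcond2 hcond3 h2e ha)
    (hmul.map_add_of_mem_peirce0_of_mem_peirceHalf h2 hid hbij hcond1' hcond3 ha₀ hb) (e + e)
  rw [hprod,
    hmul.map_add_add_of_mem_peirce1_of_mem_peirce0_of_mem_peirceHalf h2 hid hbij hcond1 hcond1'
      hcond2 hcond3 (mapsTo_two_idem_mul_peirce1.iterate k hx)
      (mapsTo_two_idem_mul_peirce0.iterate k hy) (add_mem_peirceHalf haa₀ hb),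
    two_idem_mul_of_mem_peirce0 ha₀, iterate_map_zero, hmul.map_zero hbij.2,
    two_idem_mul_of_mem_peirceHalf hb, iterate_two_idem_mul_of_mem_peirceHalf hb,
    iterate_two_idem_mul_of_mem_peirceHalf haa₀, hab, iterate_map_add] at key
  linear_combination (norm := abel) key

theorem nMulIso_add_half_prod {J J' : Type*} [NonUnitalNonAssocCommRing J] [NonUnitalNonAssocCommRing J']
    (hJordan : ∀ x y : J, ((x * x) * y) * x = (x * x) * (y * x))
    (hJordan' : ∀ x y : J', ((x * x) * y) * x = (x * x) * (y * x))
    (h2 : ∀ x : J, x + x = 0 → x = 0)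
    (e : J) (hid : e * e = e) (hne : e ≠ 0) (hnu : ∃ x : J, e * x ≠ x)
    (hcond1 : ∀ a ∈ peirce1 e, (∀ t ∈ peirceHalf e, t * a = 0) → a = 0)
    (hcond1' : ∀ a ∈ peirce0 e, (∀ t ∈ peirceHalf e, t * a = 0) → a = 0)
    (hcond2 : ∀ a ∈ peirce0 e, (∀ t ∈ peirce0 e, t * a = 0) → a = 0)
    (hcond3 : ∀ a ∈ peirceHalf e, (∀ t ∈ peirce0 e, t * a = 0) → a = 0)
    (n : ℕ) (hn : 2 ≤ n) (φ : J → J')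
    (hbij : Function.Bijective φ) (hmul : IsNMulMap n φ) :
    ∀ a ∈ peirceHalf e, ∀ b ∈ peirceHalf e, ∀ a₀ ∈ peirce0 e,
      φ (a * a₀ + b) = φ (a * a₀) + φ b :=
  nMulIso_add_half_prod_general hJordan h2 e hid hcond1 hcond1' hcond2 hcond3 n hn φ hbij hmul
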